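/- arXiv:1812.06007 — 2 statements merged into one kernel-verified Lean document; each statement's English description precedes it below -/
import Mathlib

section
/- Let A be an m×n real matrix, ℓ < min(m,n), q a positive integer, and G an n×n real matrix. Let A = URV* be the PowerURV factorization built from G (i.e., (A*A)^q G = VZ with V orthogonal and Z upper triangular, and AV = UR with U orthonormal columns, R upper triangular). Let G_rsvd = G(:,1:ℓ), Y = A(A*A)^q G_rsvd, Y = Q_r R_r an (economy) QR factorization, Q_r* A = W Σ V_r* an SVD, and U_rsvd = Q_r W. If rank(A(A*A)^q G_rsvd) ≥ rank(A), then U(:,1:ℓ) U(:,1:ℓ)* A = U_rsvd U_rsvd* A. -/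
/-!
Both projections fix `A`. The rank hypothesis forces the sketch `Y = A (AᵀA)^q G(:,1:ℓ)` to
have the same column space as `A`, so `A = Y N` for some `N`. Since `Y = Qr Rr` and
`Ursvd Ursvdᵀ = Qr Qrᵀ`, the RSVD projection fixes `A`. On the PowerURV side,
`A (AᵀA)^q G = U (R Z)` with `R Z` upper triangular, so its first `ℓ` columns, i.e. `Y`, lie in
the span of the first `ℓ` columns of `U`, and that projection fixes `A` as well.
-/

open Matrix

namespace Matrix

section Semiring

variable {R : Type*} [Semiring R] {m n p : Type*}

theorem mul_transpose_mul_of_eq_mul [Fintype m] [Fintype p] [DecidableEq p] {Q : Matrix m p R}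
    (hQ : Qᵀ * Q = 1) {A : Matrix m n R} {B : Matrix p n R} (hA : A = Q * B) :
    Q * Qᵀ * A = A := by
  rw [hA, Matrix.mul_assoc, ← Matrix.mul_assoc Qᵀ, hQ, Matrix.one_mul]

theorem transpose_mul_self_submatrix_eq_one [Fintype m] [DecidableEq n] [DecidableEq p]
    {U : Matrix m n R} (hU : Uᵀ * U = 1) {e : p → n} (he : Function.Injective e) :
    (U.submatrix id e)ᵀ * U.submatrix id e = 1 := by
  rw [transpose_submatrix, ← submatrix_mul _ _ _ _ _ Function.bijective_id, hU,
    submatrix_one _ he]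

theorem submatrix_castLE_mul_of_blockTriangular {n ℓ : ℕ} (U : Matrix m (Fin n) R)
    {P : Matrix (Fin n) (Fin n) R} (hP : P.BlockTriangular id) (h : ℓ ≤ n) :
    (U * P).submatrix id (Fin.castLE h) =
      U.submatrix id (Fin.castLE h) * P.submatrix (Fin.castLE h) (Fin.castLE h) := by
  ext i j
  refine (Fintype.sum_of_injective _ (Fin.castLE_injective h) _ _ (fun k hk => ?_)
    fun k => rfl).symm
  have hk : ℓ ≤ (k : ℕ) := by
    by_contra! hlt
    exact hk ⟨⟨k, hlt⟩, rfl⟩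
  exact mul_eq_zero_of_right _ (hP (j.isLt.trans_le hk))

end Semiring

section Field

variable {K : Type*} [Field K] {m n p : Type*} [Fintype n] [Fintype p]

theorem exists_eq_mul_of_range_mulVecLin_le [DecidableEq n] {A : Matrix m n K}
    {B : Matrix m p K} (h : LinearMap.range A.mulVecLin ≤ LinearMap.range B.mulVecLin) :
    ∃ N : Matrix p n K, A = B * N := by
  have hcol : ∀ j, ∃ x, B *ᵥ x = A.col j := fun j =>
    h ⟨Pi.single j 1, by simp [mulVec_single]⟩
  choose x hx using hcol
  refine ⟨(of x)ᵀ, ?_⟩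
  ext i j
  simpa [mul_apply, mulVec, dotProduct] using (congrFun (hx j) i).symm

theorem exists_eq_mul_mul_of_rank_le_rank_mul [Fintype m] [DecidableEq n] (A : Matrix m n K)
    (M : Matrix n p K) (h : A.rank ≤ (A * M).rank) : ∃ N : Matrix p n K, A = A * M * N := by
  refine exists_eq_mul_of_range_mulVecLin_le (Submodule.eq_of_le_of_finrank_le ?_ h).ge
  rw [mulVecLin_mul]
  exact LinearMap.range_comp_le_range _ _

end Field

end Matrix

theorem powerURV_eq_rsvd_general {m n ℓ : ℕ} (A : Matrix (Fin m) (Fin n) ℝ)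
    (hℓn : ℓ < n) (q : ℕ)
    (G : Matrix (Fin n) (Fin n) ℝ)
    -- PowerURV factorization A = U R Vᵀ built from G:
    (V Z : Matrix (Fin n) (Fin n) ℝ)
    (hZ : ∀ i j : Fin n, j < i → Z i j = 0)
    (hQR1 : (Aᵀ * A) ^ q * G = V * Z)
    (U : Matrix (Fin m) (Fin n) ℝ) (R : Matrix (Fin n) (Fin n) ℝ)
    (hU : Uᵀ * U = 1) (hR : ∀ i j : Fin n, j < i → R i j = 0)
    (hQR2 : A * V = U * R)
    -- RSVD built from G_rsvd = G(:, 1:ℓ):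
    (Grsvd : Matrix (Fin n) (Fin ℓ) ℝ)
    (hGrsvd : Grsvd = G.submatrix id (Fin.castLE hℓn.le))
    (Y : Matrix (Fin m) (Fin ℓ) ℝ)
    (hY : Y = A * (Aᵀ * A) ^ q * Grsvd)
    (Qr : Matrix (Fin m) (Fin ℓ) ℝ) (Rr : Matrix (Fin ℓ) (Fin ℓ) ℝ)
    (hQr : Qrᵀ * Qr = 1)
    (hQRr : Y = Qr * Rr)
    (W : Matrix (Fin ℓ) (Fin ℓ) ℝ)
    (hW : Wᵀ * W = 1)
    (Ursvd : Matrix (Fin m) (Fin ℓ) ℝ) (hUrsvd : Ursvd = Qr * W)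
    -- rank hypothesis on the sketch:
    (hrank : A.rank ≤ (A * (Aᵀ * A) ^ q * Grsvd).rank) :
    (U.submatrix id (Fin.castLE hℓn.le)) * (U.submatrix id (Fin.castLE hℓn.le))ᵀ * A
      = Ursvd * Ursvdᵀ * A := by
  set e := Fin.castLE hℓn.le
  obtain ⟨N, hAN⟩ := exists_eq_mul_mul_of_rank_le_rank_mul A ((Aᵀ * A) ^ q * Grsvd)
    (by rwa [← Matrix.mul_assoc])
  rw [← Matrix.mul_assoc, ← hY] at hAN
  have hYU : Y = U.submatrix id e * (R * Z).submatrix e e := by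
    rw [← submatrix_castLE_mul_of_blockTriangular U (BlockTriangular.mul hR hZ),
      ← Matrix.mul_assoc, ← hQR2, Matrix.mul_assoc, ← hQR1, ← Matrix.mul_assoc, hY, hGrsvd,
      submatrix_mul _ _ id id e Function.bijective_id, submatrix_id_id]
  have hUrsvdQr : Ursvd * Ursvdᵀ = Qr * Qrᵀ := by
    rw [hUrsvd, transpose_mul, Matrix.mul_assoc, ← Matrix.mul_assoc W, mul_eq_one_comm.mp hW,
      Matrix.one_mul]
  rw [mul_transpose_mul_of_eq_mul (transpose_mul_self_submatrix_eq_one hU (Fin.castLE_injective _))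
      (by rw [hAN, hYU, Matrix.mul_assoc]),
    hUrsvdQr, mul_transpose_mul_of_eq_mul hQr (by rw [hAN, hQRr, Matrix.mul_assoc])]

/-- The equivalence lemma between PowerURV and the RSVD: the first `ℓ` columns of
the PowerURV factor `U` define the same orthogonal projector applied to `A` as the
RSVD factor `U_rsvd` built from the first `ℓ` columns of the same random matrix. -/
theorem powerURV_eq_rsvd {m n ℓ : ℕ} (A : Matrix (Fin m) (Fin n) ℝ)
    (hℓm : ℓ < m) (hℓn : ℓ < n) (q : ℕ) (hq : 0 < q)
    (G : Matrix (Fin n) (Fin n) ℝ)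
    -- PowerURV factorization A = U R Vᵀ built from G:
    (V Z : Matrix (Fin n) (Fin n) ℝ)
    (hV : Vᵀ * V = 1) (hZ : ∀ i j : Fin n, j < i → Z i j = 0)
    (hQR1 : (Aᵀ * A) ^ q * G = V * Z)
    (U : Matrix (Fin m) (Fin n) ℝ) (R : Matrix (Fin n) (Fin n) ℝ)
    (hU : Uᵀ * U = 1) (hR : ∀ i j : Fin n, j < i → R i j = 0)
    (hQR2 : A * V = U * R)
    -- RSVD built from G_rsvd = G(:, 1:ℓ):
    (Grsvd : Matrix (Fin n) (Fin ℓ) ℝ)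
    (hGrsvd : Grsvd = G.submatrix id (Fin.castLE hℓn.le))
    (Y : Matrix (Fin m) (Fin ℓ) ℝ)
    (hY : Y = A * (Aᵀ * A) ^ q * Grsvd)
    (Qr : Matrix (Fin m) (Fin ℓ) ℝ) (Rr : Matrix (Fin ℓ) (Fin ℓ) ℝ)
    (hQr : Qrᵀ * Qr = 1) (hRr : ∀ i j : Fin ℓ, j < i → Rr i j = 0)
    (hQRr : Y = Qr * Rr)
    (W Sig : Matrix (Fin ℓ) (Fin ℓ) ℝ) (Vr : Matrix (Fin n) (Fin ℓ) ℝ)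
    (hW : Wᵀ * W = 1) (hVr : Vrᵀ * Vr = 1)
    (hSigdiag : ∀ i j : Fin ℓ, i ≠ j → Sig i j = 0) (hSigpos : ∀ i : Fin ℓ, 0 ≤ Sig i i)
    (hSVD : Qrᵀ * A = W * Sig * Vrᵀ)
    (Ursvd : Matrix (Fin m) (Fin ℓ) ℝ) (hUrsvd : Ursvd = Qr * W)
    -- rank hypothesis on the sketch:
    (hrank : A.rank ≤ (A * (Aᵀ * A) ^ q * Grsvd).rank) :
    (U.submatrix id (Fin.castLE hℓn.le)) * (U.submatrix id (Fin.castLE hℓn.le))ᵀ * A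
      = Ursvd * Ursvdᵀ * A :=
  powerURV_eq_rsvd_general A hℓn q G V Z hZ hQR1 U R hU hR hQR2 Grsvd hGrsvd Y hY Qr Rr hQr hQRr W
    hW Ursvd hUrsvd hrank
end

section
/- Let A = URV* be a URV factorization with blocks R11, R12, R22 as in the rank-revealing partition. Then σ_{k+1}(A) ≤ ‖R22‖₂ and σ_k(A) ≥ σ_min(R11), where σ_j denotes the j-th largest singular value. -/
open Matrix

noncomputable def specNorm {m n : ℕ} (A : Matrix (Fin m) (Fin n) ℝ) : ℝ :=
  ‖LinearMap.toContinuousLinearMap (Matrix.toEuclideanLin A)‖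

/-- The singular values of a real `m × n` matrix, in decreasing order:
square roots of the eigenvalues of `AᴴA`, sorted in decreasing order. -/
noncomputable def singularValues {m n : ℕ} (A : Matrix (Fin m) (Fin n) ℝ) : Fin n → ℝ :=
  fun i => Real.sqrt
    (((List.ofFn ((show (Aᵀ * A).IsHermitian by simpa using Matrix.isHermitian_conjTranspose_mul_self A).eigenvalues)).insertionSort
      (· ≥ ·)).getD i 0)

open Module
open scoped RealInnerProductSpace


lemma exists_sorted_perm {n : ℕ} (f : Fin n → ℝ) :
    ∃ e : Fin n ≃ Fin n,
      (∀ i : Fin n, ((List.ofFn f).insertionSort (· ≥ ·)).getD i 0 = f (e i)) ∧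
      Antitone (f ∘ e) := by
  classical
  let e : Fin n ≃ Fin n := (Fin.revPerm).trans (Tuple.sort f)
  have hanti : Antitone (f ∘ e) := by
    intro i j hij
    have := Tuple.monotone_sort f (Fin.rev_le_rev.mpr hij)
    simpa [e, Function.comp] using this
  have hperm : (List.ofFn (f ∘ e)).Perm (List.ofFn f) := Equiv.Perm.ofFn_comp_perm e f
  have hsorted : ((List.ofFn f).insertionSort (· ≥ ·)) = List.ofFn (f ∘ e) := by
    refine List.Perm.eq_of_pairwise' (List.pairwise_insertionSort (· ≥ ·) _) ?_
      ((List.perm_insertionSort (· ≥ ·) _).trans hperm.symm)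
    rw [List.pairwise_ofFn]
    exact fun i j hij => hanti hij.le
  refine ⟨e, fun i => ?_, hanti⟩
  rw [hsorted, List.getD_eq_getElem _ _ (by simp [i.2]), List.getElem_ofFn]
  simp


variable {n : ℕ} {H : Matrix (Fin n) (Fin n) ℝ}

lemma eigBasis_apply (hH : H.IsHermitian) (i : Fin n) :
    Matrix.toEuclideanLin H (hH.eigenvectorBasis i) = hH.eigenvalues i • hH.eigenvectorBasis i := by
  apply (WithLp.equiv 2 (Fin n → ℝ)).injective
  simpa [Matrix.toEuclideanLin_apply] using hH.mulVec_eigenvectorBasis i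

lemma rayleigh_expand (hH : H.IsHermitian) (x : EuclideanSpace ℝ (Fin n)) :
    ⟪x, Matrix.toEuclideanLin H x⟫ =
      ∑ i, hH.eigenvalues i * ⟪hH.eigenvectorBasis i, x⟫ ^ 2 := by
  set b := hH.eigenvectorBasis
  have hsym := (Matrix.isHermitian_iff_isSymmetric.mp hH)
  rw [← b.sum_inner_mul_inner x (Matrix.toEuclideanLin H x)]
  refine Finset.sum_congr rfl fun i _ => ?_
  have h1 : ⟪b i, Matrix.toEuclideanLin H x⟫ = hH.eigenvalues i * ⟪b i, x⟫ := by
    rw [← hsym (b i) x, eigBasis_apply hH i, inner_smul_left]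
    simp [b]
  rw [h1, real_inner_comm x (b i)]
  ring

lemma norm_sq_expand (b : OrthonormalBasis (Fin n) ℝ (EuclideanSpace ℝ (Fin n)))
    (x : EuclideanSpace ℝ (Fin n)) : ‖x‖ ^ 2 = ∑ i, ⟪b i, x⟫ ^ 2 := by
  rw [← real_inner_self_eq_norm_sq, ← b.sum_inner_mul_inner x x]
  refine Finset.sum_congr rfl fun i _ => ?_
  rw [real_inner_comm x (b i)]; ring


lemma rayleigh_ge (hH : H.IsHermitian) (c : ℝ) (x : EuclideanSpace ℝ (Fin n))
    (hx : ∀ i, ⟪hH.eigenvectorBasis i, x⟫ ≠ 0 → c ≤ hH.eigenvalues i) :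
    c * ‖x‖ ^ 2 ≤ ⟪x, Matrix.toEuclideanLin H x⟫ := by
  rw [rayleigh_expand hH x, norm_sq_expand hH.eigenvectorBasis x, Finset.mul_sum]
  refine Finset.sum_le_sum fun i _ => ?_
  rcases eq_or_ne (⟪hH.eigenvectorBasis i, x⟫) 0 with h0 | h0
  · simp [h0]
  · exact mul_le_mul_of_nonneg_right (hx i h0) (sq_nonneg _)

lemma rayleigh_le (hH : H.IsHermitian) (c : ℝ) (x : EuclideanSpace ℝ (Fin n))
    (hx : ∀ i, ⟪hH.eigenvectorBasis i, x⟫ ≠ 0 → hH.eigenvalues i ≤ c) :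
    ⟪x, Matrix.toEuclideanLin H x⟫ ≤ c * ‖x‖ ^ 2 := by
  rw [rayleigh_expand hH x, norm_sq_expand hH.eigenvectorBasis x, Finset.mul_sum]
  refine Finset.sum_le_sum fun i _ => ?_
  rcases eq_or_ne (⟪hH.eigenvectorBasis i, x⟫) 0 with h0 | h0
  · simp [h0]
  · exact mul_le_mul_of_nonneg_right (hx i h0) (sq_nonneg _)

lemma coord_zero_of_mem_span (b : OrthonormalBasis (Fin n) ℝ (EuclideanSpace ℝ (Fin n)))
    (s : Finset (Fin n)) (x : EuclideanSpace ℝ (Fin n))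
    (hx : x ∈ Submodule.span ℝ (b '' s)) {i : Fin n} (hi : i ∉ s) :
    ⟪b i, x⟫ = 0 := by
  have hle : Submodule.span ℝ (b '' s) ≤ LinearMap.ker ((innerSL ℝ (b i)).toLinearMap) := by
    rw [Submodule.span_le]
    rintro - ⟨j, hj, rfl⟩
    have hij : i ≠ j := fun h => hi (h ▸ hj)
    simpa using b.orthonormal.2 hij
  simpa using hle hx

lemma finrank_span_basis_image (b : OrthonormalBasis (Fin n) ℝ (EuclideanSpace ℝ (Fin n)))
    (s : Finset (Fin n)) :
    finrank ℝ (Submodule.span ℝ (b '' s) : Submodule ℝ (EuclideanSpace ℝ (Fin n))) = s.card := by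
  have hli : LinearIndependent ℝ (fun i : s => b i) :=
    b.orthonormal.linearIndependent.comp Subtype.val Subtype.val_injective
  have := finrank_span_eq_card hli
  rw [Set.image_eq_range]
  exact this.trans (Fintype.card_coe s)

lemma exists_ne_zero_mem_inf (S T : Submodule ℝ (EuclideanSpace ℝ (Fin n)))
    (h : n < finrank ℝ S + finrank ℝ T) : ∃ x, x ≠ 0 ∧ x ∈ S ∧ x ∈ T := by
  have h1 := Submodule.finrank_sup_add_finrank_inf_eq S T
  have h2 : finrank ℝ (S ⊔ T : Submodule ℝ _) ≤ n := by
    simpa [finrank_euclideanSpace_fin] using (S ⊔ T).finrank_le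
  have h3 : 0 < finrank ℝ (S ⊓ T : Submodule ℝ _) := by omega
  have hne : (S ⊓ T : Submodule ℝ _) ≠ ⊥ := by
    intro hbot
    rw [hbot] at h3
    simp at h3
  obtain ⟨x, hx, hx0⟩ := Submodule.exists_mem_ne_zero_of_ne_bot hne
  exact ⟨x, hx0, (Submodule.mem_inf.mp hx).1, (Submodule.mem_inf.mp hx).2⟩

lemma norm_toEuclideanLin_le {m n : ℕ} (M : Matrix (Fin m) (Fin n) ℝ)
    (x : EuclideanSpace ℝ (Fin n)) :
    ‖Matrix.toEuclideanLin M x‖ ≤ specNorm M * ‖x‖ := by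
  simpa [specNorm] using (LinearMap.toContinuousLinearMap (Matrix.toEuclideanLin M)).le_opNorm x

lemma quad_eq {m n : ℕ} (A : Matrix (Fin m) (Fin n) ℝ) (x : EuclideanSpace ℝ (Fin n)) :
    ⟪x, Matrix.toEuclideanLin (Aᴴ * A) x⟫ = ‖Matrix.toEuclideanLin A x‖ ^ 2 := by
  have h : Matrix.toEuclideanLin (Aᴴ * A) x
      = (Matrix.toEuclideanLin Aᴴ) (Matrix.toEuclideanLin A x) := by
    simp [Matrix.toEuclideanLin_apply, Matrix.mulVec_mulVec]
  rw [h, Matrix.toEuclideanLin_conjTranspose_eq_adjoint, LinearMap.adjoint_inner_right,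
    real_inner_self_eq_norm_sq]
lemma eig_nonneg {m n : ℕ} (A : Matrix (Fin m) (Fin n) ℝ) (i : Fin n) :
    0 ≤ (show (Aᵀ * A).IsHermitian by simpa using Matrix.isHermitian_conjTranspose_mul_self A).eigenvalues i := by
  set hH := (show (Aᵀ * A).IsHermitian by simpa using Matrix.isHermitian_conjTranspose_mul_self A)
  have h1 : hH.eigenvalues i * ‖hH.eigenvectorBasis i‖ ^ 2
      = ‖Matrix.toEuclideanLin A (hH.eigenvectorBasis i)‖ ^ 2 := by
    rw [← quad_eq, Matrix.conjTranspose_eq_transpose_of_trivial, eigBasis_apply hH i, real_inner_smul_right, real_inner_self_eq_norm_sq]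
  have h2 : ‖hH.eigenvectorBasis i‖ = 1 := hH.eigenvectorBasis.orthonormal.1 i
  rw [h2, one_pow, mul_one] at h1
  rw [h1]
  positivity

lemma sv_le_of_subspace {m n : ℕ} (A : Matrix (Fin m) (Fin n) ℝ) (k : ℕ) (hkn : k < n)
    (c : ℝ) (hc : 0 ≤ c) (T : Submodule ℝ (EuclideanSpace ℝ (Fin n))) (hT : n - k ≤ finrank ℝ T)
    (hle : ∀ x ∈ T, ‖Matrix.toEuclideanLin A x‖ ≤ c * ‖x‖) :
    singularValues A ⟨k, hkn⟩ ≤ c := by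
  set hH := (show (Aᵀ * A).IsHermitian by simpa using Matrix.isHermitian_conjTranspose_mul_self A) with hHdef
  obtain ⟨e, hgetD, hanti⟩ := exists_sorted_perm hH.eigenvalues
  set s : Finset (Fin n) := (Finset.Iic (⟨k, hkn⟩ : Fin n)).image e with hs
  set E := Submodule.span ℝ (hH.eigenvectorBasis '' s) with hE
  have hcard : s.card = k + 1 := by
    rw [hs, Finset.card_image_of_injective _ e.injective, Fin.card_Iic]
  have hEdim : finrank ℝ E = k + 1 := (finrank_span_basis_image _ _).trans hcard
  obtain ⟨x, hx0, hxE, hxT⟩ := exists_ne_zero_mem_inf E T (by omega)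
  have h1 : hH.eigenvalues (e ⟨k, hkn⟩) * ‖x‖ ^ 2 ≤ ⟪x, Matrix.toEuclideanLin (Aᴴ * A) x⟫ := by
    refine rayleigh_ge hH _ x fun i hi => ?_
    have his : i ∈ s := by
      by_contra hns
      exact hi (coord_zero_of_mem_span hH.eigenvectorBasis s x hxE hns)
    obtain ⟨j, hj, rfl⟩ := Finset.mem_image.mp his
    exact hanti (Finset.mem_Iic.mp hj)
  have h2 : ⟪x, Matrix.toEuclideanLin (Aᴴ * A) x⟫ ≤ c ^ 2 * ‖x‖ ^ 2 := by
    rw [quad_eq]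
    calc ‖Matrix.toEuclideanLin A x‖ ^ 2 ≤ (c * ‖x‖) ^ 2 := by
          have := hle x hxT
          exact pow_le_pow_left₀ (norm_nonneg _) this 2
      _ = c ^ 2 * ‖x‖ ^ 2 := by ring
  have hx2 : 0 < ‖x‖ ^ 2 := pow_pos (norm_pos_iff.mpr hx0) 2
  have hev : hH.eigenvalues (e ⟨k, hkn⟩) ≤ c ^ 2 :=
    le_of_mul_le_mul_right (by nlinarith) hx2
  calc singularValues A ⟨k, hkn⟩ = Real.sqrt (hH.eigenvalues (e ⟨k, hkn⟩)) := by
        rw [singularValues, hgetD]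
    _ ≤ Real.sqrt (c ^ 2) := Real.sqrt_le_sqrt hev
    _ = c := by rw [Real.sqrt_sq hc]

lemma le_sv_of_subspace {m n : ℕ} (A : Matrix (Fin m) (Fin n) ℝ) (j : ℕ) (hjn : j < n)
    (c : ℝ) (hc : 0 ≤ c) (S : Submodule ℝ (EuclideanSpace ℝ (Fin n))) (hS : j + 1 ≤ finrank ℝ S)
    (hge : ∀ x ∈ S, c * ‖x‖ ≤ ‖Matrix.toEuclideanLin A x‖) :
    c ≤ singularValues A ⟨j, hjn⟩ := by
  set hH := (show (Aᵀ * A).IsHermitian by simpa using Matrix.isHermitian_conjTranspose_mul_self A) with hHdef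
  obtain ⟨e, hgetD, hanti⟩ := exists_sorted_perm hH.eigenvalues
  set s : Finset (Fin n) := (Finset.Ici (⟨j, hjn⟩ : Fin n)).image e with hs
  set F := Submodule.span ℝ (hH.eigenvectorBasis '' s) with hF
  have hcard : s.card = n - j := by
    rw [hs, Finset.card_image_of_injective _ e.injective, Fin.card_Ici]
  have hFdim : finrank ℝ F = n - j := (finrank_span_basis_image _ _).trans hcard
  obtain ⟨x, hx0, hxF, hxS⟩ := exists_ne_zero_mem_inf F S (by omega)
  have h1 : ⟪x, Matrix.toEuclideanLin (Aᴴ * A) x⟫ ≤ hH.eigenvalues (e ⟨j, hjn⟩) * ‖x‖ ^ 2 := by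
    refine rayleigh_le hH _ x fun i hi => ?_
    have his : i ∈ s := by
      by_contra hns
      exact hi (coord_zero_of_mem_span hH.eigenvectorBasis s x hxF hns)
    obtain ⟨jj, hjj, rfl⟩ := Finset.mem_image.mp his
    exact hanti (Finset.mem_Ici.mp hjj)
  have h2 : c ^ 2 * ‖x‖ ^ 2 ≤ ⟪x, Matrix.toEuclideanLin (Aᴴ * A) x⟫ := by
    rw [quad_eq]
    calc c ^ 2 * ‖x‖ ^ 2 = (c * ‖x‖) ^ 2 := by ring
      _ ≤ ‖Matrix.toEuclideanLin A x‖ ^ 2 :=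
          pow_le_pow_left₀ (by positivity) (hge x hxS) 2
  have hx2 : 0 < ‖x‖ ^ 2 := pow_pos (norm_pos_iff.mpr hx0) 2
  have hev : c ^ 2 ≤ hH.eigenvalues (e ⟨j, hjn⟩) :=
    le_of_mul_le_mul_right (by nlinarith) hx2
  calc c = Real.sqrt (c ^ 2) := (Real.sqrt_sq hc).symm
    _ ≤ Real.sqrt (hH.eigenvalues (e ⟨j, hjn⟩)) := Real.sqrt_le_sqrt hev
    _ = singularValues A ⟨j, hjn⟩ := by rw [singularValues, hgetD]

lemma sv_min_mul_norm_le {p : ℕ} (B : Matrix (Fin p) (Fin p) ℝ) (hp : 0 < p)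
    (w : EuclideanSpace ℝ (Fin p)) :
    singularValues B ⟨p - 1, by omega⟩ * ‖w‖ ≤ ‖Matrix.toEuclideanLin B w‖ := by
  set hH := (show (Bᵀ * B).IsHermitian by simpa using Matrix.isHermitian_conjTranspose_mul_self B) with hHdef
  obtain ⟨e, hgetD, hanti⟩ := exists_sorted_perm hH.eigenvalues
  set lam := hH.eigenvalues (e ⟨p - 1, by omega⟩) with hlam
  have hlam0 : 0 ≤ lam := eig_nonneg B _
  have h1 : lam * ‖w‖ ^ 2 ≤ ⟪w, Matrix.toEuclideanLin (Bᴴ * B) w⟫ := by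
    refine rayleigh_ge hH _ w fun i _ => ?_
    have : hH.eigenvalues (e (e.symm i)) = hH.eigenvalues i := by rw [e.apply_symm_apply]
    rw [← this]
    exact hanti (by omega : (e.symm i).1 ≤ p - 1)
  rw [quad_eq] at h1
  have : singularValues B ⟨p - 1, by omega⟩ = Real.sqrt lam := by
    rw [singularValues, hgetD]
  rw [this]
  calc Real.sqrt lam * ‖w‖ = Real.sqrt (lam * ‖w‖ ^ 2) := by
        rw [Real.sqrt_mul hlam0, Real.sqrt_sq (norm_nonneg _)]
    _ ≤ Real.sqrt (‖Matrix.toEuclideanLin B w‖ ^ 2) := Real.sqrt_le_sqrt h1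
    _ = ‖Matrix.toEuclideanLin B w‖ := Real.sqrt_sq (norm_nonneg _)
lemma sum_decomp {n k : ℕ} (hkn : k ≤ n) (f : Fin n → ℝ) :
    ∑ j, f j = (∑ j : Fin k, f ⟨j.1, by omega⟩) + ∑ j : Fin (n - k), f ⟨k + j.1, by omega⟩ := by
  have h : k + (n - k) = n := by omega
  calc ∑ j : Fin n, f j = ∑ j : Fin (k + (n - k)), f (finCongr h j) :=
        (Fintype.sum_equiv (finCongr h) _ _ (fun j => rfl)).symm
    _ = (∑ j : Fin k, f (finCongr h (Fin.castAdd _ j)))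
        + ∑ j : Fin (n - k), f (finCongr h (Fin.natAdd k j)) := Fin.sum_univ_add _
    _ = _ := by
        congr 1 <;> refine Finset.sum_congr rfl fun j _ => ?_ <;> congr 1 <;>
          exact Fin.ext (by simp)

lemma sum_tail {n k : ℕ} (hkn : k ≤ n) (f : Fin n → ℝ) (h0 : ∀ j : Fin n, j.1 < k → f j = 0) :
    ∑ j, f j = ∑ j : Fin (n - k), f ⟨k + j.1, by omega⟩ := by
  rw [sum_decomp hkn f]
  rw [Finset.sum_eq_zero fun j _ => h0 _ (by exact j.2), zero_add]

lemma sum_head {n k : ℕ} (hkn : k ≤ n) (f : Fin n → ℝ) (h0 : ∀ j : Fin n, k ≤ j.1 → f j = 0) :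
    ∑ j, f j = ∑ j : Fin k, f ⟨j.1, by omega⟩ := by
  rw [sum_decomp hkn f]
  rw [Finset.sum_eq_zero fun (j : Fin (n - k)) _ => h0 _ (by simp), add_zero]

lemma enorm_sq {p : ℕ} (x : EuclideanSpace ℝ (Fin p)) : ‖x‖ ^ 2 = ∑ i, x i ^ 2 := by
  rw [EuclideanSpace.norm_eq, Real.sq_sqrt (by positivity)]
  exact Finset.sum_congr rfl fun i _ => by rw [Real.norm_eq_abs, sq_abs]

lemma norm_eq_of_sq_eq {a b : ℝ} (ha : 0 ≤ a) (hb : 0 ≤ b) (h : a ^ 2 = b ^ 2) : a = b := by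
  nlinarith

lemma toEuclideanLin_mul_apply {m n p : ℕ} (M : Matrix (Fin m) (Fin n) ℝ)
    (N : Matrix (Fin n) (Fin p) ℝ) (x : EuclideanSpace ℝ (Fin p)) :
    Matrix.toEuclideanLin (M * N) x = Matrix.toEuclideanLin M (Matrix.toEuclideanLin N x) := by
  simp [Matrix.toEuclideanLin_apply, Matrix.mulVec_mulVec]

lemma toEuclideanLin_coord {m n : ℕ} (M : Matrix (Fin m) (Fin n) ℝ)
    (x : EuclideanSpace ℝ (Fin n)) (i : Fin m) :
    Matrix.toEuclideanLin M x i = ∑ j, M i j * x j := rfl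

lemma isometry_norm {m n : ℕ} (U : Matrix (Fin m) (Fin n) ℝ) (hU : Uᴴ * U = 1)
    (v : EuclideanSpace ℝ (Fin n)) : ‖Matrix.toEuclideanLin U v‖ = ‖v‖ := by
  refine norm_eq_of_sq_eq (norm_nonneg _) (norm_nonneg _) ?_
  rw [← quad_eq, hU]
  have h1 : Matrix.toEuclideanLin (1 : Matrix (Fin n) (Fin n) ℝ) v = v := by
    simp [Matrix.toEuclideanLin_apply]
  rw [h1, real_inner_self_eq_norm_sq]
/-- For any URV factorization, `σ_{k+1}(A) ≤ ‖R₂₂‖₂` and `σ_min(R₁₁) ≤ σ_k(A)`. -/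
theorem urv_rank_revealing_bounds {m n : ℕ} (hmn : n ≤ m) (A : Matrix (Fin m) (Fin n) ℝ)
    (U : Matrix (Fin m) (Fin n) ℝ) (V R : Matrix (Fin n) (Fin n) ℝ)
    (hU : Uᵀ * U = 1) (hV : Vᵀ * V = 1)
    (hR : ∀ i j : Fin n, j < i → R i j = 0)
    (hA : A = U * R * Vᵀ)
    (k : ℕ) (hk : 0 < k) (hkn : k < n) :
    singularValues A ⟨k, hkn⟩
      ≤ specNorm (R.submatrix
          (fun i : Fin (n - k) => (⟨k + i.1, by omega⟩ : Fin n))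
          (fun j : Fin (n - k) => (⟨k + j.1, by omega⟩ : Fin n))) ∧
    singularValues (R.submatrix (Fin.castLE hkn.le) (Fin.castLE hkn.le)) ⟨k - 1, by omega⟩
      ≤ singularValues A ⟨k - 1, by omega⟩ := by
  have hkn' : k ≤ n := hkn.le
  have hUh : Uᴴ * U = 1 := by
    rw [Matrix.conjTranspose_eq_transpose_of_trivial]; exact hU
  have hVh : Vᴴ * V = 1 := by
    rw [Matrix.conjTranspose_eq_transpose_of_trivial]; exact hV
  have hVVt : V * Vᵀ = 1 := mul_eq_one_comm.mp hV
  have hVth : (Vᵀ)ᴴ * Vᵀ = 1 := by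
    rw [Matrix.conjTranspose_eq_transpose_of_trivial, Matrix.transpose_transpose]; exact hVVt
  set R22 := R.submatrix
      (fun i : Fin (n - k) => (⟨k + i.1, by omega⟩ : Fin n))
      (fun j : Fin (n - k) => (⟨k + j.1, by omega⟩ : Fin n)) with hR22
  set R11 := R.submatrix (Fin.castLE hkn.le) (Fin.castLE hkn.le) with hR11
  have hVtV : ∀ v : EuclideanSpace ℝ (Fin n),
      Matrix.toEuclideanLin Vᵀ (Matrix.toEuclideanLin V v) = v := by
    intro v
    rw [← toEuclideanLin_mul_apply, hV]
    simp [Matrix.toEuclideanLin_apply]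
  constructor
  · set c := specNorm R22 with hc
    have hc0 : 0 ≤ c := norm_nonneg _
    let ψ : EuclideanSpace ℝ (Fin n) →ₗ[ℝ] (Fin k → ℝ) :=
      (LinearMap.funLeft ℝ ℝ (Fin.castLE hkn')).comp
        ((WithLp.linearEquiv 2 ℝ (Fin n → ℝ)).toLinearMap.comp
          (Matrix.toEuclideanLin (R * Vᵀ)))
    refine sv_le_of_subspace A k hkn c hc0 (LinearMap.ker ψ) ?_ ?_
    · have h1 := LinearMap.finrank_range_add_finrank_ker ψ
      have h2 : finrank ℝ (LinearMap.range ψ) ≤ k := by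
        simpa using (LinearMap.range ψ).finrank_le
      rw [finrank_euclideanSpace_fin] at h1
      omega
    · intro x hx
      set y := Matrix.toEuclideanLin Vᵀ x with hy
      set z := Matrix.toEuclideanLin R y with hz
      have hAx : Matrix.toEuclideanLin A x = Matrix.toEuclideanLin U z := by
        rw [hA, toEuclideanLin_mul_apply, toEuclideanLin_mul_apply]
      have hnormAx : ‖Matrix.toEuclideanLin A x‖ = ‖z‖ := by
        rw [hAx, isometry_norm U hUh]
      have hnormy : ‖y‖ = ‖x‖ := by rw [hy, isometry_norm Vᵀ hVth]
      have hz0 : ∀ i : Fin n, i.1 < k → z i = 0 := by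
        intro i hik
        have h3 := congrFun (LinearMap.mem_ker.mp hx) ⟨i.1, hik⟩
        have h4 : ψ x ⟨i.1, hik⟩
            = Matrix.toEuclideanLin (R * Vᵀ) x (Fin.castLE hkn' ⟨i.1, hik⟩) := rfl
        have hcast : (Fin.castLE hkn' (⟨i.1, hik⟩ : Fin k)) = i := Fin.ext rfl
        rw [h4, hcast] at h3
        rw [hz, hy, ← toEuclideanLin_mul_apply]
        exact h3
      set y2 : EuclideanSpace ℝ (Fin (n - k)) := WithLp.toLp 2 (fun j : Fin (n - k) => y ⟨k + j.1, by omega⟩) with hy2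
      set z2 : EuclideanSpace ℝ (Fin (n - k)) := WithLp.toLp 2 (fun i : Fin (n - k) => z ⟨k + i.1, by omega⟩) with hz2
      have hz2eq : z2 = Matrix.toEuclideanLin R22 y2 := by
        ext i
        show z ⟨k + i.1, by omega⟩ = Matrix.toEuclideanLin R22 y2 i
        rw [hz, toEuclideanLin_coord, toEuclideanLin_coord]
        rw [sum_tail hkn' _ (fun j hj => by
          rw [hR ⟨k + i.1, by omega⟩ j (by rw [Fin.lt_def]; exact Nat.lt_of_lt_of_le hj (Nat.le_add_right k i.1)), zero_mul])]
        rfl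
      have hnz : ‖z‖ = ‖z2‖ := by
        refine norm_eq_of_sq_eq (norm_nonneg _) (norm_nonneg _) ?_
        rw [enorm_sq, enorm_sq]
        exact sum_tail hkn' _ (fun j hj => by rw [hz0 j hj]; ring)
      have hy2le : ‖y2‖ ≤ ‖y‖ := by
        have h1 : ‖y2‖ ^ 2 ≤ ‖y‖ ^ 2 := by
          rw [enorm_sq, enorm_sq]
          have h5 := sum_decomp hkn' (fun j => y j ^ 2)
          have h6 : (0:ℝ) ≤ ∑ j : Fin k, y ⟨j.1, by omega⟩ ^ 2 :=
            Finset.sum_nonneg fun _ _ => sq_nonneg _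
          have h7 : ∀ j : Fin (n - k), y2 j ^ 2 = y ⟨k + j.1, by omega⟩ ^ 2 := fun j => rfl
          simp only [h7]
          linarith
        nlinarith [norm_nonneg y2, norm_nonneg y]
      calc ‖Matrix.toEuclideanLin A x‖ = ‖z2‖ := by rw [hnormAx, hnz]
        _ = ‖Matrix.toEuclideanLin R22 y2‖ := by rw [hz2eq]
        _ ≤ c * ‖y2‖ := norm_toEuclideanLin_le R22 y2
        _ ≤ c * ‖x‖ := by
            rw [← hnormy]; exact mul_le_mul_of_nonneg_left hy2le hc0
  · set c := singularValues R11 ⟨k - 1, by omega⟩ with hc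
    have hc0 : 0 ≤ c := by rw [hc, singularValues]; exact Real.sqrt_nonneg _
    have hcinj : Function.Injective (Fin.castLE hkn') :=
      (Fin.strictMono_castLE hkn').injective
    let embL : EuclideanSpace ℝ (Fin k) →ₗ[ℝ] EuclideanSpace ℝ (Fin n) :=
      (WithLp.linearEquiv 2 ℝ (Fin n → ℝ)).symm.toLinearMap.comp
        ((Function.ExtendByZero.linearMap ℝ (Fin.castLE hkn')).comp
          (WithLp.linearEquiv 2 ℝ (Fin k → ℝ)).toLinearMap)
    have hemb_lt : ∀ (v : EuclideanSpace ℝ (Fin k)) (j : Fin n) (h : j.1 < k),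
        embL v j = v ⟨j.1, h⟩ := by
      intro v j h
      have hj : j = Fin.castLE hkn' ⟨j.1, h⟩ := Fin.ext rfl
      have h5 := hcinj.extend_apply v (0 : Fin n → ℝ) ⟨j.1, h⟩
      rw [← hj] at h5
      exact h5
    have hemb_ge : ∀ (v : EuclideanSpace ℝ (Fin k)) (j : Fin n), k ≤ j.1 → embL v j = 0 := by
      intro v j h
      show Function.extend (Fin.castLE hkn') v (0 : Fin n → ℝ) j = 0
      rw [Function.extend_apply' v (0 : Fin n → ℝ) j (by
        rintro ⟨a, ha⟩
        have h1 := congrArg Fin.val ha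
        have h2 := a.isLt
        simp only [Fin.coe_castLE] at h1
        omega)]
      rfl
    let ι := (Matrix.toEuclideanLin V).comp embL
    have hinj : Function.Injective ι := by
      intro a b hab
      have h1 : embL a = embL b := by
        have h2 := congrArg (Matrix.toEuclideanLin Vᵀ) hab
        simpa only [ι, LinearMap.comp_apply, hVtV] using h2
      ext j
      have h3 : embL a (Fin.castLE hkn' j) = embL b (Fin.castLE hkn' j) := by rw [h1]
      have hjlt : (Fin.castLE hkn' j).1 < k := j.2
      rw [hemb_lt a _ hjlt, hemb_lt b _ hjlt] at h3
      exact h3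
    have hrange : (k - 1) + 1 ≤ finrank ℝ (LinearMap.range ι) := by
      rw [LinearMap.finrank_range_of_inj hinj, finrank_euclideanSpace_fin]
      omega
    refine le_sv_of_subspace A (k - 1) (by omega) c hc0 (LinearMap.range ι) hrange ?_
    intro x hx
    obtain ⟨w, rfl⟩ := hx
    set ew := embL w with hew
    have hiw : ι w = Matrix.toEuclideanLin V ew := rfl
    have hnormx : ‖ι w‖ = ‖w‖ := by
      rw [hiw, isometry_norm V hVh]
      refine norm_eq_of_sq_eq (norm_nonneg _) (norm_nonneg _) ?_
      rw [enorm_sq, enorm_sq]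
      rw [sum_head hkn' _ (fun j hj => by
        rw [hew, hemb_ge w j hj]; ring)]
      refine Finset.sum_congr rfl fun j _ => ?_
      rw [hew, hemb_lt w ⟨j.1, by omega⟩ j.2]
    set z := Matrix.toEuclideanLin R ew with hz
    have hAx : ‖Matrix.toEuclideanLin A (ι w)‖ = ‖z‖ := by
      rw [hA, toEuclideanLin_mul_apply, toEuclideanLin_mul_apply, isometry_norm U hUh]
      congr 1
      rw [hiw, hVtV]
    have hz0 : ∀ i : Fin n, k ≤ i.1 → z i = 0 := by
      intro i hik
      rw [hz, toEuclideanLin_coord]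
      refine Finset.sum_eq_zero fun j _ => ?_
      by_cases h : j.1 < k
      · rw [hR i j (by rw [Fin.lt_def]; omega), zero_mul]
      · rw [hew, hemb_ge w j (by omega), mul_zero]
    set z1 : EuclideanSpace ℝ (Fin k) := WithLp.toLp 2 (fun i : Fin k => z ⟨i.1, by omega⟩) with hz1
    have hz1eq : z1 = Matrix.toEuclideanLin R11 w := by
      ext i
      show z ⟨i.1, by omega⟩ = Matrix.toEuclideanLin R11 w i
      rw [hz, toEuclideanLin_coord, toEuclideanLin_coord]
      rw [sum_head hkn' _ (fun j hj => by
        rw [hew, hemb_ge w j hj, mul_zero])]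
      refine Finset.sum_congr rfl fun j _ => ?_
      rw [hew, hemb_lt w ⟨j.1, by omega⟩ j.2]
      rfl
    have hnz : ‖z‖ = ‖z1‖ := by
      refine norm_eq_of_sq_eq (norm_nonneg _) (norm_nonneg _) ?_
      rw [enorm_sq, enorm_sq]
      exact sum_head hkn' _ (fun j hj => by rw [hz0 j hj]; ring)
    calc c * ‖ι w‖ = c * ‖w‖ := by rw [hnormx]
      _ ≤ ‖Matrix.toEuclideanLin R11 w‖ := sv_min_mul_norm_le R11 hk w
      _ = ‖z‖ := by rw [← hz1eq, hnz]
      _ = ‖Matrix.toEuclideanLin A (ι w)‖ := hAx.symm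
end
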